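/- For the three-web on the domain {(x¹,x²,y¹,y²) ∈ ℝ⁴ : y¹ ≠ −1, y² ≠ −1, x¹x² ≠ 1} given by f¹ = x¹ + y¹ + x¹y², f² = x² + y² + x²y¹, the torsion covector is a₁ = 1/((1 + y¹)(1 − x¹x²)) and a₂ = 1/((1 + y²)(1 − x¹x²)); in particular a₁ ≠ 0 and a₂ ≠ 0 at every point of the domain. -/

import Mathlib

noncomputable section

open Matrix

/-- Partial derivative of `g` with respect to the `j`-th coordinate at the point `x`. -/
def pd (j : Fin 2) (g : (Fin 2 → ℝ) → ℝ) (x : Fin 2 → ℝ) : ℝ :=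
  deriv (fun t => g (Function.update x j t)) (x j)

variable (f : Fin 2 → (Fin 2 → ℝ) → (Fin 2 → ℝ) → ℝ)

/-- Jacobian matrix `f̄ = (∂fⁱ/∂xʲ)` with respect to the first group of variables. -/
def fbar (x y : Fin 2 → ℝ) : Matrix (Fin 2) (Fin 2) ℝ :=
  Matrix.of fun i j => pd j (fun x' => f i x' y) x

/-- Jacobian matrix `f̃ = (∂fⁱ/∂yʲ)` with respect to the second group of variables. -/
def ftil (x y : Fin 2 → ℝ) : Matrix (Fin 2) (Fin 2) ℝ :=
  Matrix.of fun i j => pd j (fun y' => f i x y') y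

/-- Mixed second partial derivative `∂²fⁱ/∂xˡ∂yᵐ`. -/
def d2 (i l m : Fin 2) (x y : Fin 2 → ℝ) : ℝ :=
  pd m (fun y' => pd l (fun x' => f i x' y') x) y

/-- Connection coefficients
`Γⁱⱼₖ = −∑_{l,m} (∂²fⁱ/∂xˡ∂yᵐ) ḡˡⱼ g̃ᵐₖ`, where `ḡ = f̄⁻¹`, `g̃ = f̃⁻¹`. -/
def Gam (i j k : Fin 2) (x y : Fin 2 → ℝ) : ℝ :=
  - ∑ l : Fin 2, ∑ m : Fin 2,
      d2 f i l m x y * (fbar f x y)⁻¹ l j * (ftil f x y)⁻¹ m k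

/-- Torsion covector `aⱼ = ∑ₖ (Γᵏⱼₖ − Γᵏₖⱼ)`. -/
def aCov (j : Fin 2) (x y : Fin 2 → ℝ) : ℝ :=
  ∑ k : Fin 2, (Gam f k j k x y - Gam f k k j x y)

/-- Covariant derivative `p_{ik} = ∑ₘ (∂aᵢ/∂xᵐ) ḡᵐₖ − ∑ⱼ aⱼ Γʲₖᵢ`. -/
def pCov (i k : Fin 2) (x y : Fin 2 → ℝ) : ℝ :=
  (∑ m : Fin 2, pd m (fun x' => aCov f i x' y) x * (fbar f x y)⁻¹ m k)
    - ∑ j : Fin 2, aCov f j x y * Gam f j k i x y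

/-- Covariant derivative `q_{ik} = ∑ₘ (∂aᵢ/∂yᵐ) g̃ᵐₖ − ∑ⱼ aⱼ Γʲᵢₖ`. -/
def qCov (i k : Fin 2) (x y : Fin 2 → ℝ) : ℝ :=
  (∑ m : Fin 2, pd m (fun y' => aCov f i x y') y * (ftil f x y)⁻¹ m k)
    - ∑ j : Fin 2, aCov f j x y * Gam f j i k x y

/-- Isoclinicity invariant `p = (p₁₂ − p₂₁)/2`. -/
def pIso (x y : Fin 2 → ℝ) : ℝ := (pCov f 0 1 x y - pCov f 1 0 x y) / 2

/-- Isoclinicity invariant `q = (q₁₂ − q₂₁)/2`. -/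
def qIso (x y : Fin 2 → ℝ) : ℝ := (qCov f 0 1 x y - qCov f 1 0 x y) / 2


/-- The web `f¹ = x¹ + y¹ + x¹y²`, `f² = x² + y² + x²y¹`.
(Indices: `x 0 ↦ x¹`, `x 1 ↦ x²`, `y 0 ↦ y¹`, `y 1 ↦ y²`.) -/
noncomputable def webE : Fin 2 → (Fin 2 → ℝ) → (Fin 2 → ℝ) → ℝ :=
  ![fun x y => x 0 + y 0 + x 0 * y 1,
    fun x y => x 1 + y 1 + x 1 * y 0]


/-! The web is affine in `x` and in `y` separately, so `f̄ = diag(1 + y², 1 + y¹)` and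
`f̃ = [[1, x¹], [x², 1]]` are read off directly, and the only nonzero mixed derivatives are
`∂²f¹/∂x¹∂y² = ∂²f²/∂x²∂y¹ = 1`. Hence `Γⁱⱼₖ = −ḡⁱⱼ g̃ⁱ'ₖ` with `i'` the other index, and each
`aⱼ` collapses to a single product of a diagonal entry of `ḡ` with a diagonal entry of `g̃`. -/

open Function

theorem pd_eq_of_update_affine {j : Fin 2} {g : (Fin 2 → ℝ) → ℝ} {x : Fin 2 → ℝ} {b : ℝ}
    (h : ∀ t, g (update x j t) = g (update x j 0) + b * t) : pd j g x = b := by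
  rw [pd, funext h]
  simp

theorem Matrix.inv_fin_two_of {K : Type*} [Field K] (a b c d : K) :
    !![a, b; c, d]⁻¹ = (a * d - b * c)⁻¹ • !![d, -b; -c, a] := by
  rw [inv_def, adjugate_fin_two_of, det_fin_two_of, Ring.inverse_eq_inv]

theorem aCov_zero (x y : Fin 2 → ℝ) : aCov f 0 x y = Gam f 1 0 1 x y - Gam f 1 1 0 x y := by
  simp [aCov, Fin.sum_univ_two]

theorem aCov_one (x y : Fin 2 → ℝ) : aCov f 1 x y = Gam f 0 1 0 x y - Gam f 0 0 1 x y := by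
  simp [aCov, Fin.sum_univ_two]

theorem fbar_webE (x y : Fin 2 → ℝ) : fbar webE x y = !![1 + y 1, 0; 0, 1 + y 0] := by
  ext i j
  simp only [fbar, of_apply]
  fin_cases i <;> fin_cases j <;>
    exact pd_eq_of_update_affine fun t => by simp [webE] <;> ring

theorem ftil_webE (x y : Fin 2 → ℝ) : ftil webE x y = !![1, x 0; x 1, 1] := by
  ext i j
  simp only [ftil, of_apply]
  fin_cases i <;> fin_cases j <;>
    exact pd_eq_of_update_affine fun t => by simp [webE] <;> ring

theorem d2_webE (i l m : Fin 2) (x y : Fin 2 → ℝ) :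
    d2 webE i l m x y = if l = i ∧ m = i.rev then 1 else 0 := by
  change pd m (fun y' => fbar webE x y' i l) y = _
  simp only [fbar_webE]
  fin_cases i <;> fin_cases l <;> fin_cases m <;>
    exact pd_eq_of_update_affine fun t => by simp

theorem Gam_webE (i j k : Fin 2) (x y : Fin 2 → ℝ) :
    Gam webE i j k x y = -((fbar webE x y)⁻¹ i j * (ftil webE x y)⁻¹ i.rev k) := by
  simp [Gam, d2_webE, ite_and]

theorem aCov_webE_zero (x y : Fin 2 → ℝ) (hy : 1 + y 1 ≠ 0) :
    aCov webE 0 x y = 1 / ((1 + y 0) * (1 - x 0 * x 1)) := by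
  rw [aCov_zero, Gam_webE, Gam_webE, fbar_webE, ftil_webE, inv_fin_two_of, inv_fin_two_of]
  simp only [Matrix.smul_apply, of_apply, cons_val', cons_val_zero, cons_val_one, cons_val_fin_one,
    Fin.reduceRev, smul_eq_mul, mul_zero, sub_zero, mul_one, one_div, mul_inv]
  linear_combination (1 + y 0)⁻¹ * (1 - x 0 * x 1)⁻¹ * inv_mul_cancel₀ hy

theorem aCov_webE_one (x y : Fin 2 → ℝ) (hy : 1 + y 0 ≠ 0) :
    aCov webE 1 x y = 1 / ((1 + y 1) * (1 - x 0 * x 1)) := by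
  rw [aCov_one, Gam_webE, Gam_webE, fbar_webE, ftil_webE, inv_fin_two_of, inv_fin_two_of]
  simp only [Matrix.smul_apply, of_apply, cons_val', cons_val_zero, cons_val_one, cons_val_fin_one,
    Fin.reduceRev, smul_eq_mul, mul_zero, sub_zero, mul_one, one_div, mul_inv]
  linear_combination (1 + y 1)⁻¹ * (1 - x 0 * x 1)⁻¹ * inv_mul_cancel₀ hy

/-- For the web `webE` on the domain `y¹ ≠ −1, y² ≠ −1, x¹x² ≠ 1`, the torsion
covector is `a₁ = 1/((1 + y¹)(1 − x¹x²))` and `a₂ = 1/((1 + y²)(1 − x¹x²))`;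
in particular `a₁ ≠ 0` and `a₂ ≠ 0` at every point of the domain. -/
theorem webE_torsion_covector (x y : Fin 2 → ℝ)
    (h1 : y 0 ≠ -1) (h2 : y 1 ≠ -1) (h3 : x 0 * x 1 ≠ 1) :
    aCov webE 0 x y = 1 / ((1 + y 0) * (1 - x 0 * x 1)) ∧
    aCov webE 1 x y = 1 / ((1 + y 1) * (1 - x 0 * x 1)) ∧
    aCov webE 0 x y ≠ 0 ∧ aCov webE 1 x y ≠ 0 := by
  have hy0 : 1 + y 0 ≠ 0 := fun h => h1 (by linarith)
  have hy1 : 1 + y 1 ≠ 0 := fun h => h2 (by linarith)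
  have hD : 1 - x 0 * x 1 ≠ 0 := fun h => h3 (by linarith)
  rw [aCov_webE_zero x y hy1, aCov_webE_one x y hy0]
  exact ⟨rfl, rfl, one_div_ne_zero (mul_ne_zero hy0 hD), one_div_ne_zero (mul_ne_zero hy1 hD)⟩

end
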